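/- Let A = (a_{ij}) be an n×n real matrix such that a_{ij} < 0 whenever i ≠ j, and such that for every i the row sum ∑_{j=1}^n a_{ij} is strictly positive. Then det(A) ≠ 0. -/

import Mathlib

open Finset

theorem Matrix.sum_norm_offDiag_lt_norm_diag_of_offDiag_nonpos {ι : Type*} [Fintype ι]
    [DecidableEq ι] (A : Matrix ι ι ℝ) (hoff : ∀ i j, i ≠ j → A i j ≤ 0)
    (hrow : ∀ i, 0 < ∑ j, A i j) (k : ι) :
    ∑ j ∈ univ.erase k, ‖A k j‖ < ‖A k k‖ := by
  have hnorm : ∑ j ∈ univ.erase k, ‖A k j‖ = -∑ j ∈ univ.erase k, A k j := by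
    rw [← sum_neg_distrib]
    refine sum_congr rfl fun j hj => ?_
    rw [Real.norm_eq_abs, abs_of_nonpos (hoff k j (ne_of_mem_erase hj).symm)]
  have hsplit : A k k + ∑ j ∈ univ.erase k, A k j = ∑ j, A k j :=
    add_sum_erase _ _ (mem_univ k)
  calc ∑ j ∈ univ.erase k, ‖A k j‖ = -∑ j ∈ univ.erase k, A k j := hnorm
    _ < A k k := by linarith [hrow k]
    _ ≤ ‖A k k‖ := Real.le_norm_self _

theorem stmt_0 {n : ℕ} (A : Matrix (Fin n) (Fin n) ℝ)
    (hoff : ∀ i j, i ≠ j → A i j < 0)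
    (hrow : ∀ i, 0 < ∑ j, A i j) :
    A.det ≠ 0 :=
  det_ne_zero_of_sum_row_lt_diag
    (A.sum_norm_offDiag_lt_norm_diag_of_offDiag_nonpos (fun i j h => (hoff i j h).le) hrow)
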